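/- Let α ∈ (0, √(√2−1)] and ρ > 0, and define γ(ω) = −(1/2)·ln(((1+ω²)² + α²ω²)/((α²+ω²)·sinc²(ρω))). Set ρ* = √(3/α² − 6 − 3α²). Then ω = 0 is a local maximum of γ if ρ > ρ* and a local minimum if ρ < ρ*. -/

import Mathlib

/-- `sinc x = sin x / x` for `x ≠ 0` and `1` at `x = 0`. -/
noncomputable def sinc (x : ℝ) : ℝ := if x = 0 then 1 else Real.sin x / x

/-- Spectral curve of the 2×2 system of Example 2. -/
noncomputable def γcurve (α ρ ω : ℝ) : ℝ :=
  -(1 / 2) * Real.log (((1 + ω ^ 2) ^ 2 + α ^ 2 * ω ^ 2) / ((α ^ 2 + ω ^ 2) * (sinc (ρ * ω)) ^ 2))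

lemma sinc_bound {x : ℝ} (hx : |x| ≤ 1) : |sinc x - (1 - x ^ 2 / 6)| ≤ |x| ^ 3 * (5 / 96) := by
  rcases eq_or_ne x 0 with rfl | hx0
  · simp [sinc]
  · have h := Real.sin_bound hx
    rw [sinc, if_neg hx0]
    have habs : 0 < |x| := abs_pos.2 hx0
    have heq : Real.sin x / x - (1 - x ^ 2 / 6) = (Real.sin x - (x - x ^ 3 / 6)) / x := by
      field_simp
    rw [heq, abs_div, div_le_iff₀ habs]
    calc |Real.sin x - (x - x ^ 3 / 6)| ≤ |x| ^ 4 * (5 / 96) := h.trans (by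
          have h4 : 0 ≤ |x| ^ 4 := by positivity
          nlinarith [mul_le_mul_of_nonneg_left hx h4])
      _ = |x| ^ 3 * (5 / 96) * |x| := by ring

lemma sinc_pos {x : ℝ} (hx : |x| ≤ 1) : 0 < sinc x := by
  have h := abs_le.1 (sinc_bound hx)
  have ha : 0 ≤ |x| := abs_nonneg x
  have hsq : |x| ^ 2 = x ^ 2 := sq_abs x
  nlinarith [pow_le_one₀ ha hx (n := 2), pow_le_one₀ ha hx (n := 3)]

lemma sincsq_bound {x : ℝ} (hx : |x| ≤ 1) : |sinc x ^ 2 - (1 - x ^ 2 / 3)| ≤ |x| ^ 3 / 2 := by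
  have h := abs_le.1 (sinc_bound hx)
  have ha : 0 ≤ |x| := abs_nonneg x
  have hsq : |x| ^ 2 = x ^ 2 := sq_abs x
  have h3 : (0:ℝ) ≤ |x| ^ 3 := by positivity
  have h31 : |x| ^ 3 ≤ 1 := pow_le_one₀ ha hx
  rw [abs_le]
  constructor <;> nlinarith [sq_nonneg (sinc x - (1 - x ^ 2 / 6)),
    pow_le_one₀ ha hx (n := 2), sq_nonneg (|x| ^ 3)]

/-- Value of the spectral curve at 0. -/
lemma γcurve_zero (α ρ : ℝ) : γcurve α ρ 0 = -(1 / 2) * Real.log (1 / α ^ 2) := by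
  simp [γcurve, sinc]

set_option maxHeartbeats 1000000 in
/-- Near 0, the quantity `α²N(ω) − D(ω)` is `c ω² + O(|ω|³)` where
`c = 2α² + α⁴ − 1 + α²ρ²/3`; also the sinc factor is positive there. -/
lemma key_estimate (α ρ c : ℝ) (hα0 : 0 < α) (hρ : 0 < ρ)
    (hc : c = 2 * α ^ 2 + α ^ 4 - 1 + α ^ 2 * ρ ^ 2 / 3) (hcne : c ≠ 0) :
    ∀ᶠ ω in nhds (0 : ℝ),
      |α ^ 2 * ((1 + ω ^ 2) ^ 2 + α ^ 2 * ω ^ 2) - (α ^ 2 + ω ^ 2) * (sinc (ρ * ω)) ^ 2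
        - c * ω ^ 2| ≤ |c| / 2 * ω ^ 2 ∧ 0 < sinc (ρ * ω) := by
  set K : ℝ := α ^ 2 + ρ ^ 2 / 3 + (α ^ 2 + 1) * ρ ^ 3 / 2 with hK
  have hKpos : 0 < K := by positivity
  have hcpos : 0 < |c| := abs_pos.2 hcne
  set δ : ℝ := min 1 (min (1 / ρ) (|c| / (2 * K))) with hδ
  have hδpos : 0 < δ := by
    apply lt_min (by norm_num)
    exact lt_min (by positivity) (by positivity)
  filter_upwards [eventually_abs_sub_lt 0 hδpos] with ω hω
  rw [sub_zero] at hω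
  have hω1 : |ω| ≤ 1 := hω.le.trans (min_le_left _ _)
  have hωρ : |ω| ≤ 1 / ρ := hω.le.trans ((min_le_right _ _).trans (min_le_left _ _))
  have hωc : |ω| ≤ |c| / (2 * K) := hω.le.trans ((min_le_right _ _).trans (min_le_right _ _))
  have hρω : |ρ * ω| ≤ 1 := by
    rw [abs_mul, abs_of_pos hρ]
    calc ρ * |ω| ≤ ρ * (1 / ρ) := by
          exact mul_le_mul_of_nonneg_left hωρ hρ.le
      _ = 1 := by field_simp
  refine ⟨?_, sinc_pos hρω⟩
  have hE := sincsq_bound hρω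
  set E : ℝ := sinc (ρ * ω) ^ 2 - (1 - (ρ * ω) ^ 2 / 3) with hEdef
  have hsinc2 : sinc (ρ * ω) ^ 2 = E + (1 - (ρ * ω) ^ 2 / 3) := by rw [hEdef]; ring
  have expand : α ^ 2 * ((1 + ω ^ 2) ^ 2 + α ^ 2 * ω ^ 2)
      - (α ^ 2 + ω ^ 2) * (sinc (ρ * ω)) ^ 2 - c * ω ^ 2
      = ω ^ 4 * (α ^ 2 + ρ ^ 2 / 3) - (α ^ 2 + ω ^ 2) * E := by
    rw [hsinc2, hc]; ring
  rw [expand]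
  have hEabs : |E| ≤ ρ ^ 3 * |ω| ^ 3 / 2 := by
    calc |E| ≤ |ρ * ω| ^ 3 / 2 := hE
      _ = ρ ^ 3 * |ω| ^ 3 / 2 := by rw [abs_mul, abs_of_pos hρ, mul_pow]
  have h1 : |ω ^ 4 * (α ^ 2 + ρ ^ 2 / 3)| ≤ |ω| ^ 3 * (α ^ 2 + ρ ^ 2 / 3) := by
    rw [abs_mul, abs_of_nonneg (by positivity : (0:ℝ) ≤ α ^ 2 + ρ ^ 2 / 3)]
    have : |ω ^ 4| = |ω| ^ 3 * |ω| := by rw [abs_pow]; ring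
    rw [this]
    have : |ω| ^ 3 * |ω| ≤ |ω| ^ 3 * 1 := by
      exact mul_le_mul_of_nonneg_left hω1 (by positivity)
    nlinarith [this, abs_nonneg ω, pow_nonneg (abs_nonneg ω) 3, sq_nonneg ρ, sq_nonneg α]
  have h2 : |(α ^ 2 + ω ^ 2) * E| ≤ (α ^ 2 + 1) * (ρ ^ 3 * |ω| ^ 3 / 2) := by
    rw [abs_mul, abs_of_nonneg (by positivity : (0:ℝ) ≤ α ^ 2 + ω ^ 2)]
    have hω2 : ω ^ 2 ≤ 1 := by
      have := sq_abs ω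
      nlinarith [pow_le_one₀ (abs_nonneg ω) hω1 (n := 2)]
    calc (α ^ 2 + ω ^ 2) * |E| ≤ (α ^ 2 + 1) * |E| :=
          mul_le_mul_of_nonneg_right (by linarith) (abs_nonneg E)
      _ ≤ (α ^ 2 + 1) * (ρ ^ 3 * |ω| ^ 3 / 2) :=
          mul_le_mul_of_nonneg_left hEabs (by positivity)
  have hK3 : |ω| ^ 3 * (α ^ 2 + ρ ^ 2 / 3) + (α ^ 2 + 1) * (ρ ^ 3 * |ω| ^ 3 / 2)
      = K * |ω| ^ 3 := by rw [hK]; ring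
  have hfin : K * |ω| ^ 3 ≤ |c| / 2 * ω ^ 2 := by
    have h3 : |ω| ^ 3 = |ω| * ω ^ 2 := by rw [← sq_abs]; ring
    rw [h3]
    have : K * (|ω| * ω ^ 2) = (K * |ω|) * ω ^ 2 := by ring
    rw [this]
    have hKω : K * |ω| ≤ |c| / 2 := by
      have := mul_le_mul_of_nonneg_left hωc hKpos.le
      calc K * |ω| ≤ K * (|c| / (2 * K)) := this
        _ = |c| / 2 := by
            rw [mul_div_assoc', show (2:ℝ) * K = K * 2 by ring,
              mul_div_mul_left _ _ hKpos.ne']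
    exact mul_le_mul_of_nonneg_right hKω (sq_nonneg ω)
  calc |ω ^ 4 * (α ^ 2 + ρ ^ 2 / 3) - (α ^ 2 + ω ^ 2) * E|
      ≤ |ω ^ 4 * (α ^ 2 + ρ ^ 2 / 3)| + |(α ^ 2 + ω ^ 2) * E| := abs_sub _ _
    _ ≤ |ω| ^ 3 * (α ^ 2 + ρ ^ 2 / 3) + (α ^ 2 + 1) * (ρ ^ 3 * |ω| ^ 3 / 2) := by
        exact add_le_add h1 h2
    _ = K * |ω| ^ 3 := hK3
    _ ≤ |c| / 2 * ω ^ 2 := hfin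

/-- Comparison of `γcurve` values via the sign of `α²N − D`. -/
lemma γ_compare (α ρ ω : ℝ) (hα0 : 0 < α) (hs : 0 < sinc (ρ * ω)) :
    (0 ≤ α ^ 2 * ((1 + ω ^ 2) ^ 2 + α ^ 2 * ω ^ 2) - (α ^ 2 + ω ^ 2) * (sinc (ρ * ω)) ^ 2 →
      γcurve α ρ ω ≤ γcurve α ρ 0) ∧
    (α ^ 2 * ((1 + ω ^ 2) ^ 2 + α ^ 2 * ω ^ 2) - (α ^ 2 + ω ^ 2) * (sinc (ρ * ω)) ^ 2 ≤ 0 →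
      γcurve α ρ 0 ≤ γcurve α ρ ω) := by
  have hαsq : (0:ℝ) < α ^ 2 := by positivity
  set N : ℝ := (1 + ω ^ 2) ^ 2 + α ^ 2 * ω ^ 2 with hN
  set D : ℝ := (α ^ 2 + ω ^ 2) * (sinc (ρ * ω)) ^ 2 with hD
  have hNpos : 0 < N := by rw [hN]; nlinarith [sq_nonneg ω, sq_nonneg (1 + ω ^ 2)]
  have hDpos : 0 < D := by rw [hD]; positivity
  have hγω : γcurve α ρ ω = -(1 / 2) * Real.log (N / D) := rfl
  rw [γcurve_zero]
  constructor
  · intro hg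
    have hle : 1 / α ^ 2 ≤ N / D := by
      rw [div_le_div_iff₀ hαsq hDpos]
      nlinarith
    have := Real.log_le_log (by positivity) hle
    rw [hγω]; linarith
  · intro hg
    have hle : N / D ≤ 1 / α ^ 2 := by
      rw [div_le_div_iff₀ hDpos hαsq]
      nlinarith
    have := Real.log_le_log (by positivity : (0:ℝ) < N / D) hle
    rw [hγω]; linarith

/-- For `α ∈ (0, √(√2−1)]` and `ρ* = √(3/α² − 6 − 3α²)`, the point `ω = 0` is a local
maximum of `γ` if `ρ > ρ*` and a local minimum if `ρ < ρ*`. -/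
theorem example2_local_extremum (α ρ : ℝ) (hα0 : 0 < α)
    (hα : α ≤ Real.sqrt (Real.sqrt 2 - 1)) (hρ : 0 < ρ) :
    (Real.sqrt (3 / α ^ 2 - 6 - 3 * α ^ 2) < ρ → IsLocalMax (γcurve α ρ) 0) ∧
    (ρ < Real.sqrt (3 / α ^ 2 - 6 - 3 * α ^ 2) → IsLocalMin (γcurve α ρ) 0) := by
  have hαsq : (0:ℝ) < α ^ 2 := by positivity
  set A : ℝ := 3 / α ^ 2 - 6 - 3 * α ^ 2 with hA
  have hcA : ∀ r : ℝ, 2 * α ^ 2 + α ^ 4 - 1 + α ^ 2 * r ^ 2 / 3 = α ^ 2 * (r ^ 2 - A) / 3 := by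
    intro r
    rw [hA]; field_simp; ring
  constructor
  · -- local max: ρ* < ρ
    intro hlt
    have hρ2 : A < ρ ^ 2 := (Real.sqrt_lt' hρ).1 hlt
    obtain ⟨c, hc⟩ : ∃ c : ℝ, c = 2 * α ^ 2 + α ^ 4 - 1 + α ^ 2 * ρ ^ 2 / 3 := ⟨_, rfl⟩
    have hcpos : 0 < c := by
      rw [hc, hcA ρ]
      have h1 : 0 < ρ ^ 2 - A := by linarith
      exact div_pos (mul_pos hαsq h1) (by norm_num)
    have hkey := key_estimate α ρ c hα0 hρ hc hcpos.ne'
    unfold IsLocalMax IsMaxFilter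
    filter_upwards [hkey] with ω hω
    obtain ⟨hbound, hs⟩ := hω
    have habs := abs_le.1 hbound
    have hg : 0 ≤ α ^ 2 * ((1 + ω ^ 2) ^ 2 + α ^ 2 * ω ^ 2)
        - (α ^ 2 + ω ^ 2) * (sinc (ρ * ω)) ^ 2 := by
      have h1 := habs.1
      rw [abs_of_pos hcpos] at h1
      nlinarith [mul_nonneg hcpos.le (sq_nonneg ω)]
    exact (γ_compare α ρ ω hα0 hs).1 hg
  · -- local min: ρ < ρ*
    intro hlt
    have hρ2 : ρ ^ 2 < A := by
      have h := (Real.lt_sqrt hρ.le).1 hlt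
      exact h
    obtain ⟨c, hc⟩ : ∃ c : ℝ, c = 2 * α ^ 2 + α ^ 4 - 1 + α ^ 2 * ρ ^ 2 / 3 := ⟨_, rfl⟩
    have hcneg : c < 0 := by
      rw [hc, hcA ρ]
      have h1 : ρ ^ 2 - A < 0 := by linarith
      exact div_neg_of_neg_of_pos (mul_neg_of_pos_of_neg hαsq h1) (by norm_num)
    have hkey := key_estimate α ρ c hα0 hρ hc hcneg.ne
    unfold IsLocalMin IsMinFilter
    filter_upwards [hkey] with ω hω
    obtain ⟨hbound, hs⟩ := hω
    have habs := abs_le.1 hbound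
    have hg : α ^ 2 * ((1 + ω ^ 2) ^ 2 + α ^ 2 * ω ^ 2)
        - (α ^ 2 + ω ^ 2) * (sinc (ρ * ω)) ^ 2 ≤ 0 := by
      have h1 := habs.2
      rw [abs_of_neg hcneg] at h1
      nlinarith [mul_nonneg (neg_nonneg.2 hcneg.le) (sq_nonneg ω)]
    exact (γ_compare α ρ ω hα0 hs).2 hg
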